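/- arXiv:1304.0376 — 9 statements merged into one kernel-verified Lean document; each statement's English description precedes it below -/
import Mathlib

section
/- Let X be a real Banach space, z* a norm-one functional on X, z in the closed unit ball of X, and η > 0 with Re z*(z) > 1 - η. Then for any k ∈ (0,1) there exist ỹ* ∈ X* and ỹ in the unit sphere of X such that ‖ỹ*‖ = ỹ*(ỹ), ‖z - ỹ‖ < η/k, and ‖z* - ỹ*‖ < k. -/
/-!
Ekeland's variational principle, applied to `z*` on the unit ball with a slope `δ < k`, gives a
point `y` near `z` such that `z* x ≤ z* y + δ‖x - y‖` on the ball. Separating the open cone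
`{(v, r) | δ‖v‖ < r}` from the hypograph of `z*` over `B_X - y` yields `G` with `‖G‖ ≤ δ`
such that `z* - G` is maximal on the ball at `y`, i.e. attains its norm there.
-/

open Set Metric Filter

section Ekeland

variable {α : Type*} [MetricSpace α] {f : α → ℝ} {δ : ℝ}

def ekelandSet (f : α → ℝ) (δ : ℝ) (p : α) : Set α := {w | f p + δ * dist w p ≤ f w}

theorem mem_ekelandSet_self (p : α) : p ∈ ekelandSet f δ p := by
  simp [ekelandSet]

theorem ekelandSet_subset_of_mem (hδ : 0 ≤ δ) {p w : α} (hw : w ∈ ekelandSet f δ p) :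
    ekelandSet f δ w ⊆ ekelandSet f δ p := fun v hv => by
  have := mul_le_mul_of_nonneg_left (dist_triangle v w p) hδ
  simp only [ekelandSet, mem_ofPred_eq] at hw hv ⊢
  linarith

theorem UpperSemicontinuous.isClosed_ekelandSet (hf : UpperSemicontinuous f) (p : α) :
    IsClosed (ekelandSet f δ p) := by
  have hg : UpperSemicontinuous fun w => f w + -(δ * dist w p) :=
    hf.add (continuous_const.mul (continuous_id.dist continuous_const)).neg.upperSemicontinuous
  convert hg.isClosed_preimage (f p) using 1
  ext w
  simp only [ekelandSet, mem_ofPred_eq, mem_preimage, mem_Ici]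
  constructor <;> intro h <;> linarith

theorem exists_mem_ekelandSet_subset_closedBall (hbdd : BddAbove (range f)) (hδ : 0 < δ)
    (p : α) {ε : ℝ} (hε : 0 < ε) :
    ∃ w ∈ ekelandSet f δ p, ekelandSet f δ w ⊆ closedBall w ε := by
  have hne : (f '' ekelandSet f δ p).Nonempty := ⟨f p, p, mem_ekelandSet_self p, rfl⟩
  obtain ⟨_, ⟨w, hw, rfl⟩, hw_sup⟩ :=
    exists_lt_of_lt_csSup hne (sub_lt_self _ (mul_pos hδ hε))
  refine ⟨w, hw, fun x hx => ?_⟩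
  have hx_sup : f x ≤ sSup (f '' ekelandSet f δ p) :=
    le_csSup (hbdd.mono (image_subset_range _ _))
      ⟨x, ekelandSet_subset_of_mem hδ.le hw hx, rfl⟩
  have hx_dist : f w + δ * dist x w ≤ f x := hx
  exact mem_closedBall.2 <| le_of_mul_le_mul_left (by linarith) hδ

theorem UpperSemicontinuous.exists_ekelandSet_eq_singleton [CompleteSpace α]
    (hf : UpperSemicontinuous f) (hbdd : BddAbove (range f)) (hδ : 0 < δ) (z : α) :
    ∃ y ∈ ekelandSet f δ z, ekelandSet f δ y = {y} := by
  choose g hg_mem hg_ball using fun (n : ℕ) p =>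
    exists_mem_ekelandSet_subset_closedBall hbdd hδ p (Nat.one_div_pos_of_nat (n := n))
  let u : ℕ → α := fun n => Nat.rec z (fun n p => g n p) n
  have hu_anti : Antitone fun n => ekelandSet f δ (u n) :=
    antitone_nat_of_succ_le fun n => ekelandSet_subset_of_mem hδ.le (hg_mem n (u n))
  have hu_mem {m n : ℕ} (h : m ≤ n) : u n ∈ ekelandSet f δ (u m) :=
    hu_anti h (mem_ekelandSet_self _)
  have hu_ball (n : ℕ) : ekelandSet f δ (u (n + 1)) ⊆ closedBall (u (n + 1)) (1 / (n + 1)) :=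
    hg_ball n (u n)
  have hu_cauchy : CauchySeq u := by
    refine Metric.cauchySeq_iff'.2 fun ε hε => ?_
    obtain ⟨N, hN⟩ := exists_nat_one_div_lt hε
    exact ⟨N + 1, fun n hn => (mem_closedBall.1 (hu_ball N (hu_mem hn))).trans_lt hN⟩
  obtain ⟨y, hy⟩ := cauchySeq_tendsto_of_complete hu_cauchy
  have hy_mem (n : ℕ) : y ∈ ekelandSet f δ (u n) :=
    (hf.isClosed_ekelandSet _).mem_of_tendsto hy <| (eventually_ge_atTop n).mono fun _ => hu_mem
  refine ⟨y, hy_mem 0, eq_singleton_iff_unique_mem.2 ⟨mem_ekelandSet_self y, fun x hx => ?_⟩⟩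
  refine eq_of_forall_dist_le fun ε hε => ?_
  obtain ⟨N, hN⟩ := exists_nat_one_div_lt (half_pos hε)
  have hx_ball := hu_ball N (ekelandSet_subset_of_mem hδ.le (hy_mem (N + 1)) hx)
  have hy_ball := hu_ball N (hy_mem (N + 1))
  rw [mem_closedBall] at hx_ball hy_ball
  linarith [dist_triangle_right x y (u (N + 1))]

theorem IsClosed.exists_forall_le_add_mul_dist [CompleteSpace α] {s : Set α} (hs : IsClosed s)
    (hf : ContinuousOn f s) (hbdd : BddAbove (f '' s)) (hδ : 0 < δ) {z : α} (hz : z ∈ s) :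
    ∃ y ∈ s, f z + δ * dist y z ≤ f y ∧ ∀ x ∈ s, f x ≤ f y + δ * dist x y := by
  have := hs.completeSpace_coe
  have hf' : Continuous (f ∘ ((↑) : s → α)) := hf.comp_continuous continuous_subtype_val (·.2)
  obtain ⟨y, hyz, hy⟩ := hf'.upperSemicontinuous.exists_ekelandSet_eq_singleton
    (by rwa [range_comp, Subtype.range_coe]) hδ ⟨z, hz⟩
  refine ⟨y, y.2, hyz, fun x hx => not_lt.1 fun hlt => ?_⟩
  obtain rfl : (⟨x, hx⟩ : s) = y := hy.subset (show ⟨x, hx⟩ ∈ ekelandSet (f ∘ (↑)) δ y from hlt.le)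
  simp at hlt

end Ekeland

section Sandwich

variable {X : Type*} [NormedAddCommGroup X] [NormedSpace ℝ X]

theorem Convex.exists_norm_le_forall_le_of_le_mul_norm {t : Set X} (ht : Convex ℝ t)
    (h0 : (0 : X) ∈ t) (φ : StrongDual ℝ X) {c : ℝ} (hc : 0 ≤ c)
    (hφ : ∀ v ∈ t, φ v ≤ c * ‖v‖) :
    ∃ G : StrongDual ℝ X, ‖G‖ ≤ c ∧ ∀ v ∈ t, φ v ≤ G v := by
  set A : Set (X × ℝ) := {p | p.1 ∈ univ ∧ c • ‖p.1‖ < p.2}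
  set B : Set (X × ℝ) := {p | p.1 ∈ t ∧ p.2 ≤ φ p.1}
  have hA_convex : Convex ℝ A := (convexOn_univ_norm.smul hc).convex_strict_epigraph
  have hA_open : IsOpen A := by
    simp only [A, mem_univ, true_and, smul_eq_mul]
    exact isOpen_lt (by fun_prop) continuous_snd
  have hB_convex : Convex ℝ B := (φ.toLinearMap.concaveOn ht).convex_hypograph
  have hAB : Disjoint A B := disjoint_left.2 fun p ⟨_, hpA⟩ ⟨hpt, hpB⟩ =>
    (hφ p.1 hpt).not_gt (hpA.trans_le hpB)
  obtain ⟨L, u, hLA, hLB⟩ := geometric_hahn_banach_open hA_convex hA_open hB_convex hAB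
  set ℓ := L (0, 1)
  have hL (v : X) (r : ℝ) : L (v, r) = L (v, 0) + r * ℓ := by
    rw [← smul_eq_mul, ← map_smul, ← map_add]
    simp
  have hu_nonpos : u ≤ 0 := by simpa using hLB 0 ⟨h0, by simp⟩
  have hℓ : ℓ < 0 := (hLA (0, 1) ⟨trivial, by simp⟩).trans_le hu_nonpos
  have hu_nonneg : 0 ≤ u := by
    by_contra! hu
    have := hLA (0, u / ℓ) ⟨trivial, by simpa using div_pos_of_neg_of_neg hu hℓ⟩
    rw [hL, Prod.mk_zero_zero, map_zero, zero_add, div_mul_cancel₀ _ hℓ.ne] at this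
    exact this.false
  set G : StrongDual ℝ X := (-ℓ)⁻¹ • L.comp (ContinuousLinearMap.inl ℝ X ℝ)
  have hG (v : X) : G v = L (v, 0) / -ℓ := by simp [G, div_eq_inv_mul]
  have hG_le (v : X) : G v ≤ c * ‖v‖ := le_of_forall_gt fun r hr => by
    have := hLA (v, r) ⟨trivial, hr⟩
    rw [hL] at this
    rw [hG, div_lt_iff₀ (neg_pos.2 hℓ)]
    linarith
  refine ⟨G, G.opNorm_le_bound hc fun v => abs_le.2 ⟨?_, hG_le v⟩, fun v hv => ?_⟩
  · have := hG_le (-v)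
    rw [map_neg, norm_neg] at this
    linarith
  · have := hLB (v, φ v) ⟨hv, le_rfl⟩
    rw [hL] at this
    rw [hG, le_div_iff₀ (neg_pos.2 hℓ)]
    linarith

theorem Convex.exists_norm_le_isMaxOn_sub {s : Set X} (hs : Convex ℝ s) {y : X} (hy : y ∈ s)
    (φ : StrongDual ℝ X) {c : ℝ} (hc : 0 ≤ c) (hφ : ∀ x ∈ s, φ x ≤ φ y + c * ‖x - y‖) :
    ∃ G : StrongDual ℝ X, ‖G‖ ≤ c ∧ IsMaxOn (φ - G) s y := by
  obtain ⟨G, hG, hφG⟩ :=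
    (hs.translate_preimage_left y).exists_norm_le_forall_le_of_le_mul_norm (by simpa) φ hc
      fun v hv => by
        have := hφ _ hv
        simp only [map_add, add_sub_cancel_right] at this
        linarith
  refine ⟨G, hG, fun x hx => ?_⟩
  have := hφG (x - y) (by simpa using hx)
  rw [map_sub, map_sub] at this
  show φ x - G x ≤ φ y - G y
  linarith

theorem StrongDual.norm_eq_apply_of_isMaxOn {f : StrongDual ℝ X} {y : X} (hy : ‖y‖ ≤ 1)
    (hmax : IsMaxOn f (closedBall 0 1) y) : ‖f‖ = f y := by
  have hle {x : X} (hx : ‖x‖ ≤ 1) : f x ≤ f y := hmax (mem_closedBall_zero_iff.2 hx)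
  refine le_antisymm (f.opNorm_le_of_unit_norm ?_ fun x hx => abs_le.2 ⟨?_, hle hx.le⟩) ?_
  · simpa using hle (norm_zero.trans_le zero_le_one)
  · have := hle (x := -x) (by rw [norm_neg, hx])
    rw [map_neg] at this
    linarith
  · calc f y ≤ ‖f‖ * ‖y‖ := (le_abs_self _).trans (f.le_opNorm y)
      _ ≤ ‖f‖ := mul_le_of_le_one_right (norm_nonneg f) hy

theorem StrongDual.norm_eq_one_of_norm_eq_apply {f : StrongDual ℝ X} {y : X} (hy : ‖y‖ ≤ 1)
    (hf : f ≠ 0) (h : ‖f‖ = f y) : ‖y‖ = 1 :=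
  le_antisymm hy <| (le_mul_iff_one_le_right (norm_pos_iff.2 hf)).1 <|
    h.trans_le ((le_abs_self _).trans (f.le_opNorm y))

end Sandwich

/-- Phelps' refinement of Bishop-Phelps, specialized to the unit ball. -/
theorem phelps_refinement
    (X : Type*) [NormedAddCommGroup X] [NormedSpace ℝ X] [CompleteSpace X]
    (zstar : X →L[ℝ] ℝ) (hzstar : ‖zstar‖ = 1)
    (z : X) (hz : ‖z‖ ≤ 1)
    (η : ℝ) (hη : 0 < η) (hzz : zstar z > 1 - η)
    (k : ℝ) (hk0 : 0 < k) (hk1 : k < 1) :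
    ∃ (ystar : X →L[ℝ] ℝ) (y : X), ‖y‖ = 1 ∧
      ‖ystar‖ = ystar y ∧ ‖z - y‖ < η / k ∧ ‖zstar - ystar‖ < k := by
  have hle_one {x : X} (hx : ‖x‖ ≤ 1) : zstar x ≤ 1 :=
    (le_abs_self _).trans (hzstar ▸ zstar.unit_le_opNorm x hx)
  -- the lower bound on `δ` turns `δ‖y - z‖ ≤ 1 - z* z` into `‖z - y‖ < η / k`
  obtain ⟨δ, hδ_lo, hδ_hi⟩ : ∃ δ, k * (1 - zstar z) / η < δ ∧ δ < k :=
    exists_between (by rw [div_lt_iff₀ hη]; nlinarith)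
  have hδ : 0 < δ := lt_of_le_of_lt (by have := hle_one hz; positivity) hδ_lo
  obtain ⟨y, hy, hyz, hsupp⟩ := isClosed_closedBall.exists_forall_le_add_mul_dist
    zstar.continuous.continuousOn
    ⟨1, by rintro _ ⟨x, hx, rfl⟩; exact hle_one (mem_closedBall_zero_iff.1 hx)⟩ hδ
    (mem_closedBall_zero_iff.2 hz)
  simp only [dist_eq_norm] at hyz hsupp
  have hy_norm := mem_closedBall_zero_iff.1 hy
  obtain ⟨G, hG, hmax⟩ :=
    (convex_closedBall 0 1).exists_norm_le_isMaxOn_sub hy zstar hδ.le hsupp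
  have hnorm := StrongDual.norm_eq_apply_of_isMaxOn hy_norm hmax
  refine ⟨zstar - G, y, StrongDual.norm_eq_one_of_norm_eq_apply hy_norm (sub_ne_zero.2 ?_) hnorm,
    hnorm, ?_, by rw [sub_sub_cancel]; linarith⟩
  · rintro rfl
    linarith
  · rw [div_lt_iff₀ hη] at hδ_lo
    rw [norm_sub_rev, lt_div_iff₀ hk0]
    nlinarith [hle_one hy_norm]
end

section
/- Let X be the real two-dimensional space ℓ∞⁽²⁾ (ℝ² with the max norm) and let 0 < δ < 2. Set z = (1 - √(2δ), 1) ∈ S_X and z* = (√(2δ)/2, 1 - √(2δ)/2) ∈ S_{X*}. Then z*(z) = 1 - δ, yet there is no pair (y, y*) ∈ Π(X) with ‖z - y‖ < √(2δ) and ‖z* - y*‖ < √(2δ). -/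
/-!
A functional `f` on `ℓ∞ⁿ` has norm `∑ i, |f eᵢ|`, and if `f` attains its norm at `y` in the unit
ball then `y i * f eᵢ = |f eᵢ|` for every `i`. Any `y` within `√(2δ)` of `z` has `y 0 < 1`, so
a norm-one functional attaining its norm at such a `y` has `f e₀ ≤ 0`; but every norm-one
functional with `f e₀ ≤ 0` lies at distance at least `√(2δ)` from `z*`.
-/

/-- The functional on ℓ∞⁽²⁾ given by `v ↦ a * v 0 + b * v 1`. -/
noncomputable def dualFunctional (a b : ℝ) : (Fin 2 → ℝ) →L[ℝ] ℝ :=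
  LinearMap.toContinuousLinearMap
    (a • (LinearMap.proj 0 : ((i : Fin 2) → ℝ) →ₗ[ℝ] ℝ) +
     b • (LinearMap.proj 1 : ((i : Fin 2) → ℝ) →ₗ[ℝ] ℝ))

open Finset

namespace ContinuousLinearMap

variable {ι : Type*} [Fintype ι] [DecidableEq ι]

theorem apply_eq_sum_mul_apply_single (f : (ι → ℝ) →L[ℝ] ℝ) (v : ι → ℝ) :
    f v = ∑ i, v i * f (Pi.single i 1) := by
  conv_lhs => rw [← univ_sum_single v]
  simp only [map_sum]
  refine sum_congr rfl fun i _ => ?_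
  rw [← smul_eq_mul, ← map_smul, ← Pi.single_smul, smul_eq_mul, mul_one]

theorem norm_eq_sum_abs_apply_single (f : (ι → ℝ) →L[ℝ] ℝ) :
    ‖f‖ = ∑ i, |f (Pi.single i 1)| := by
  apply le_antisymm
  · refine f.opNorm_le_bound (by positivity) fun v => ?_
    rw [f.apply_eq_sum_mul_apply_single, Real.norm_eq_abs, sum_mul]
    refine (abs_sum_le_sum_abs _ _).trans (sum_le_sum fun i _ => ?_)
    rw [abs_mul, mul_comm]
    exact mul_le_mul_of_nonneg_left (norm_le_pi_norm v i) (abs_nonneg _)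
  · let w : ι → ℝ := fun i => SignType.sign (f (Pi.single i 1))
    have hw : ‖w‖ ≤ 1 := (pi_norm_le_iff_of_nonneg zero_le_one).2 fun i => by
      rcases lt_trichotomy (f (Pi.single i 1)) 0 with h | h | h <;> simp [w, h]
    calc ∑ i, |f (Pi.single i 1)| = f w := by
          simp only [f.apply_eq_sum_mul_apply_single w, w, sign_mul_self]
      _ ≤ ‖f‖ * ‖w‖ := (le_abs_self _).trans (f.le_opNorm w)
      _ ≤ ‖f‖ := mul_le_of_le_one_right (norm_nonneg f) hw

theorem apply_single_nonpos_of_apply_eq_one {f : (ι → ℝ) →L[ℝ] ℝ} {y : ι → ℝ} (hf : ‖f‖ ≤ 1)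
    (hy : ‖y‖ ≤ 1) (hfy : f y = 1) {i : ι} (hi : y i < 1) : f (Pi.single i 1) ≤ 0 := by
  by_contra! hpos
  have hlt : ∑ j, y j * f (Pi.single j 1) < ∑ j, |f (Pi.single j 1)| := by
    refine sum_lt_sum (fun j _ => ?_) ⟨i, mem_univ i, ?_⟩
    · calc y j * f (Pi.single j 1) ≤ |y j| * |f (Pi.single j 1)| :=
          (le_abs_self _).trans_eq (abs_mul _ _)
        _ ≤ |f (Pi.single j 1)| :=
          mul_le_of_le_one_left (abs_nonneg _) ((norm_le_pi_norm y j).trans hy)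
    · rw [abs_of_pos hpos]
      exact mul_lt_of_lt_one_left hpos hi
  rw [← f.apply_eq_sum_mul_apply_single, hfy, ← f.norm_eq_sum_abs_apply_single] at hlt
  linarith

end ContinuousLinearMap

@[simp]
theorem dualFunctional_apply (a b : ℝ) (v : Fin 2 → ℝ) :
    dualFunctional a b v = a * v 0 + b * v 1 := by
  simp [dualFunctional]

theorem norm_dualFunctional (a b : ℝ) : ‖dualFunctional a b‖ = |a| + |b| := by
  simp [ContinuousLinearMap.norm_eq_sum_abs_apply_single, Fin.sum_univ_two]

theorem le_abs_sub_add_abs_sub {s a b : ℝ} (hs : s ≤ 2) (ha : a ≤ 0) (hab : |a| + |b| = 1) :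
    s ≤ |s / 2 - a| + |1 - s / 2 - b| := by
  rw [abs_of_nonpos ha] at hab
  rcases abs_cases b with ⟨_, _⟩ | ⟨_, _⟩ <;>
    rcases abs_cases (s / 2 - a) with ⟨_, _⟩ | ⟨_, _⟩ <;>
    rcases abs_cases (1 - s / 2 - b) with ⟨_, _⟩ | ⟨_, _⟩ <;> linarith

theorem le_norm_dualFunctional_sub {s : ℝ} (hs : s ≤ 2) {f : (Fin 2 → ℝ) →L[ℝ] ℝ} (hf : ‖f‖ = 1)
    (hf₀ : f (Pi.single 0 1) ≤ 0) : s ≤ ‖dualFunctional (s / 2) (1 - s / 2) - f‖ := by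
  rw [f.norm_eq_sum_abs_apply_single, Fin.sum_univ_two] at hf
  simpa [ContinuousLinearMap.norm_eq_sum_abs_apply_single, Fin.sum_univ_two]
    using le_abs_sub_add_abs_sub hs hf₀ hf

theorem not_exists_norming_pair_near {s : ℝ} (hs : s ≤ 2) :
    ¬ ∃ (y : Fin 2 → ℝ) (f : (Fin 2 → ℝ) →L[ℝ] ℝ), ‖y‖ = 1 ∧ ‖f‖ = 1 ∧ f y = 1 ∧
      ‖![1 - s, 1] - y‖ < s ∧ ‖dualFunctional (s / 2) (1 - s / 2) - f‖ < s := by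
  rintro ⟨y, f, hy, hf, hfy, hzy, hzf⟩
  have hy₀ : y 0 < 1 := by
    have h := (abs_lt.1 ((norm_le_pi_norm _ 0).trans_lt hzy)).1
    simp only [Pi.sub_apply, Matrix.cons_val_zero] at h
    linarith
  have hf₀ := f.apply_single_nonpos_of_apply_eq_one hf.le hy.le hfy hy₀
  exact (le_norm_dualFunctional_sub hs hf hf₀).not_gt hzf

theorem norm_vec_one_sub_one {s : ℝ} (hs₀ : 0 ≤ s) (hs₂ : s ≤ 2) :
    ‖(![1 - s, 1] : Fin 2 → ℝ)‖ = 1 := by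
  refine le_antisymm ((pi_norm_le_iff_of_nonneg zero_le_one).2 ?_) ?_
  · simp only [Fin.forall_fin_two, Matrix.cons_val_zero, Matrix.cons_val_one, Real.norm_eq_abs,
      abs_le, Matrix.cons_val_fin_one]
    exact ⟨⟨by linarith, by linarith⟩, by norm_num⟩
  · simpa using norm_le_pi_norm (![1 - s, 1] : Fin 2 → ℝ) 1

/-- Sharpness of the √(2δ) bound in the space ℓ∞⁽²⁾. -/
theorem sharpness_linf2 (δ : ℝ) (hδ0 : 0 < δ) (hδ2 : δ < 2) :
    let z : Fin 2 → ℝ := ![1 - Real.sqrt (2 * δ), 1]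
    let zstar : (Fin 2 → ℝ) →L[ℝ] ℝ :=
      dualFunctional (Real.sqrt (2 * δ) / 2) (1 - Real.sqrt (2 * δ) / 2)
    ‖z‖ = 1 ∧ ‖zstar‖ = 1 ∧ zstar z = 1 - δ ∧
      ¬ ∃ (y : Fin 2 → ℝ) (ystar : (Fin 2 → ℝ) →L[ℝ] ℝ),
          ‖y‖ = 1 ∧ ‖ystar‖ = 1 ∧ ystar y = 1 ∧
          ‖z - y‖ < Real.sqrt (2 * δ) ∧ ‖zstar - ystar‖ < Real.sqrt (2 * δ) := by
  intro z zstar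
  have hs₀ : 0 ≤ √(2 * δ) := Real.sqrt_nonneg _
  have hs₂ : √(2 * δ) ≤ 2 := Real.sqrt_le_iff.2 ⟨zero_le_two, by linarith⟩
  have hs_sq : √(2 * δ) ^ 2 = 2 * δ := Real.sq_sqrt (by linarith)
  refine ⟨norm_vec_one_sub_one hs₀ hs₂, ?_, ?_, not_exists_norming_pair_near hs₂⟩
  · rw [norm_dualFunctional, abs_of_nonneg (by linarith), abs_of_nonneg (by linarith)]
    ring
  · simp only [zstar, z, dualFunctional_apply, Matrix.cons_val_zero, Matrix.cons_val_one]
    linear_combination (-1 / 2 : ℝ) * hs_sq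
end

section
/- Let X be a real Banach space. For every pair (x₀, x₀*) ∈ B_X × B_{X*} there exists a pair (y, y*) ∈ Π(X) with y*(x₀) + x₀*(y) ≥ 0. -/
theorem exists_norm_one_dual_pair (X : Type*) [NormedAddCommGroup X] [NormedSpace ℝ X]
    [Nontrivial X] :
    ∃ (y : X) (ystar : StrongDual ℝ X), ‖y‖ = 1 ∧ ‖ystar‖ = 1 ∧ ystar y = 1 := by
  obtain ⟨y, hy⟩ := exists_norm_eq X zero_le_one
  obtain ⟨ystar, hystar, hystar_y⟩ :=
    exists_dual_vector ℝ y (by rw [hy]; exact one_ne_zero)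
  exact ⟨y, ystar, hy, hystar, by rw [hystar_y, hy]; rfl⟩

theorem exists_Pi_pair_nonneg_general
    (X : Type*) [NormedAddCommGroup X] [NormedSpace ℝ X]
    [Nontrivial X]
    (x₀ : X)
    (x₀star : X →L[ℝ] ℝ) :
    ∃ (y : X) (ystar : X →L[ℝ] ℝ), ‖y‖ = 1 ∧ ‖ystar‖ = 1 ∧ ystar y = 1 ∧
      0 ≤ ystar x₀ + x₀star y := by
  obtain ⟨y, ystar, hy, hystar, hystar_y⟩ := exists_norm_one_dual_pair X
  -- `(-y, -y*)` also lies in `Π(X)` and flips the sign of `y*(x₀) + x₀*(y)`.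
  rcases le_or_gt 0 (ystar x₀ + x₀star y) with h | h
  · exact ⟨y, ystar, hy, hystar, hystar_y, h⟩
  · refine ⟨-y, -ystar, by rwa [norm_neg], by rwa [norm_neg], by simpa using hystar_y, ?_⟩
    simp only [neg_apply, map_neg]
    linarith

/-- For every pair in `B_X × B_{X*}` there is a pair in `Π(X)` with
`y*(x₀) + x₀*(y) ≥ 0`. -/
theorem exists_Pi_pair_nonneg
    (X : Type*) [NormedAddCommGroup X] [NormedSpace ℝ X] [CompleteSpace X]
    [Nontrivial X]
    (x₀ : X) (hx₀ : ‖x₀‖ ≤ 1)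
    (x₀star : X →L[ℝ] ℝ) (hx₀star : ‖x₀star‖ ≤ 1) :
    ∃ (y : X) (ystar : X →L[ℝ] ℝ), ‖y‖ = 1 ∧ ‖ystar‖ = 1 ∧ ystar y = 1 ∧
      0 ≤ ystar x₀ + x₀star y :=
  exists_Pi_pair_nonneg_general X x₀ x₀star
end

section
/- Let X be a real Banach space and 0 < δ < δ₀ ≤ 1. If (x₀, x₀*) ∈ B_X × B_{X*} satisfies x₀*(x₀) > 1 - δ₀, then the ℓ∞-distance from (x₀, x₀*) to the set A_X(δ) = {(x, x*) ∈ B_X × B_{X*} : x*(x) > 1 - δ} is at most 2(√(1-δ) - √(1-δ₀))/(1 - √(1-δ₀)). -/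
/-!
Put `r₀ = √(1-δ₀)`, `r = √(1-δ)` and `t = (r - r₀)/(1 - r₀) ∈ [0,1)`, so that `r = (1-t) r₀ + t`.
Take a norming functional `g` of `x₀` and move `x₀*` towards it, `f = (1-t) x₀* + t g`, which costs
at most `2t`; at the same time stretch `x₀` radially to norm `min 1 (‖x₀‖ + 2t)`, which also costs at
most `2t`. As `x₀*(x₀) > r₀²`, an elementary inequality (convexity of the square when the stretch
reaches the unit sphere) gives `f(x) > r² = 1 - δ`.
-/

open Metric

section Scalar

variable {r₀ t N : ℝ}

lemma convexComb_sq_mul_le (ht0 : 0 ≤ t) (ht1 : t ≤ 1) (hN0 : 0 ≤ N) (hN1 : N ≤ 1) :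
    (r₀ * (1 - t) + t) ^ 2 * N ≤ (1 - t) * r₀ ^ 2 + t * N := by
  have jensen : (r₀ * (1 - t) + t) ^ 2 ≤ (1 - t) * r₀ ^ 2 + t := by
    nlinarith [mul_nonneg (mul_nonneg ht0 (sub_nonneg.2 ht1)) (sq_nonneg (1 - r₀))]
  nlinarith [mul_nonneg (mul_nonneg (sub_nonneg.2 ht1) (sq_nonneg r₀)) (sub_nonneg.2 hN1)]

lemma convexComb_sq_mul_le_add_mul (ht0 : 0 ≤ t) (ht1 : t ≤ 1) (hN0 : 0 ≤ N) :
    (r₀ * (1 - t) + t) ^ 2 * N ≤ (N + 2 * t) * ((1 - t) * r₀ ^ 2 + t * N) := by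
  -- the difference is `t * ((N - (1-t) r₀)² + (1-t) r₀² (N + 1 + t) + t N)`
  have h1 : 0 ≤ (1 - t) * r₀ ^ 2 * (N + 1 + t) :=
    mul_nonneg (mul_nonneg (sub_nonneg.2 ht1) (sq_nonneg r₀)) (by linarith)
  nlinarith [mul_nonneg ht0 (sq_nonneg (N - (1 - t) * r₀)), mul_nonneg ht0 h1,
    mul_nonneg (sq_nonneg t) hN0]

lemma convexComb_sq_lt_min_div_mul {c : ℝ} (ht0 : 0 ≤ t) (ht1 : t < 1) (hN0 : 0 < N)
    (hN1 : N ≤ 1) (hc : r₀ ^ 2 < c) :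
    (r₀ * (1 - t) + t) ^ 2 < min 1 (N + 2 * t) / N * ((1 - t) * c + t * N) := by
  have hM : 0 < min 1 (N + 2 * t) / N := div_pos (lt_min one_pos (by linarith)) hN0
  have hle : (r₀ * (1 - t) + t) ^ 2 * N ≤ min 1 (N + 2 * t) * ((1 - t) * r₀ ^ 2 + t * N) := by
    rw [min_mul_of_nonneg _ _ (by positivity)]
    exact le_min (by simpa using convexComb_sq_mul_le ht0 ht1.le hN0.le hN1)
      (convexComb_sq_mul_le_add_mul ht0 ht1.le hN0.le)
  calc (r₀ * (1 - t) + t) ^ 2 ≤ min 1 (N + 2 * t) / N * ((1 - t) * r₀ ^ 2 + t * N) := by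
        rwa [div_mul_eq_mul_div, le_div_iff₀ hN0]
    _ < min 1 (N + 2 * t) / N * ((1 - t) * c + t * N) := by gcongr

end Scalar

section Normed

variable {X : Type*} [NormedAddCommGroup X] [NormedSpace ℝ X]

lemma norm_div_norm_smul {x : X} (hx : x ≠ 0) {M : ℝ} (hM : 0 ≤ M) : ‖(M / ‖x‖) • x‖ = M := by
  rw [norm_smul, Real.norm_of_nonneg (by positivity), div_mul_cancel₀ _ (norm_ne_zero_iff.2 hx)]

lemma dist_div_norm_smul {x : X} (hx : x ≠ 0) {M : ℝ} (hM : ‖x‖ ≤ M) :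
    dist x ((M / ‖x‖) • x) = M - ‖x‖ := by
  have hx' : 0 < ‖x‖ := norm_pos_iff.2 hx
  have hsub : x - (M / ‖x‖) • x = (1 - M / ‖x‖) • x := by module
  have hscale : 1 - M / ‖x‖ ≤ 0 := by rw [sub_nonpos, one_le_div hx']; exact hM
  rw [dist_eq_norm, hsub, norm_smul, Real.norm_of_nonpos hscale, neg_sub, sub_mul, div_mul_cancel₀ _ hx'.ne', one_mul]

lemma exists_norm_le_one_dist_le_apply_eq (x : X) {φ : X →L[ℝ] ℝ} (hφ : ‖φ‖ ≤ 1) {t : ℝ}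
    (ht0 : 0 ≤ t) (ht1 : t ≤ 1) :
    ∃ f : X →L[ℝ] ℝ, ‖f‖ ≤ 1 ∧ dist φ f ≤ 2 * t ∧ f x = (1 - t) * φ x + t * ‖x‖ := by
  obtain ⟨g, hg, hgx⟩ := exists_dual_vector'' ℝ x
  refine ⟨(1 - t) • φ + t • g, ?_, ?_, by simp [hgx]⟩
  · calc ‖(1 - t) • φ + t • g‖ ≤ (1 - t) * ‖φ‖ + t * ‖g‖ := by
          refine (norm_add_le _ _).trans_eq ?_
          rw [norm_smul, norm_smul, Real.norm_of_nonneg (sub_nonneg.2 ht1), Real.norm_of_nonneg ht0]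
      _ ≤ 1 := by nlinarith
  · have : φ - ((1 - t) • φ + t • g) = t • (φ - g) := by module
    rw [dist_eq_norm, this, norm_smul, Real.norm_of_nonneg ht0, mul_comm]
    gcongr
    linarith [norm_sub_le φ g]

variable (X) in
/-- The set `A_X(δ)`. -/
def approxNormingPairs (δ : ℝ) : Set (X × (X →L[ℝ] ℝ)) :=
  {p | ‖p.1‖ ≤ 1 ∧ ‖p.2‖ ≤ 1 ∧ p.2 p.1 > 1 - δ}

lemma infDist_approxNormingPairs_le {x₀ : X} (hx₀ : ‖x₀‖ ≤ 1) {φ : X →L[ℝ] ℝ} (hφ : ‖φ‖ ≤ 1)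
    {r₀ t δ : ℝ} (ht0 : 0 ≤ t) (ht1 : t < 1) (hφx₀ : r₀ ^ 2 < φ x₀) (hδ : 1 - δ ≤ (r₀ * (1 - t) + t) ^ 2) :
    infDist (x₀, φ) (approxNormingPairs X δ) ≤ 2 * t := by
  have hφN : φ x₀ ≤ ‖x₀‖ := (Real.le_norm_self _).trans
    ((φ.le_opNorm x₀).trans (mul_le_of_le_one_left (norm_nonneg x₀) hφ))
  have hN : 0 < ‖x₀‖ := ((sq_nonneg r₀).trans_lt hφx₀).trans_le hφN
  have hx₀0 : x₀ ≠ 0 := norm_pos_iff.1 hN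
  set M := min 1 (‖x₀‖ + 2 * t)
  have hNM : ‖x₀‖ ≤ M := le_min hx₀ (by linarith)
  obtain ⟨f, hf, hdf, hfx₀⟩ := exists_norm_le_one_dist_le_apply_eq x₀ hφ ht0 ht1.le
  have hmem : ((M / ‖x₀‖) • x₀, f) ∈ approxNormingPairs X δ := by
    refine ⟨(norm_div_norm_smul hx₀0 (hN.le.trans hNM)).trans_le (min_le_left _ _), hf, ?_⟩
    rw [map_smul, hfx₀, smul_eq_mul]
    exact hδ.trans_lt (convexComb_sq_lt_min_div_mul ht0 ht1 hN hx₀ hφx₀)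
  calc infDist (x₀, φ) _ ≤ dist (x₀, φ) ((M / ‖x₀‖) • x₀, f) := infDist_le_dist_of_mem hmem
    _ ≤ 2 * t := by
      rw [Prod.dist_eq, dist_div_norm_smul hx₀0 hNM]
      exact max_le (by linarith [min_le_right 1 (‖x₀‖ + 2 * t)]) hdf

end Normed

theorem infDist_to_A_le_general
    (X : Type*) [NormedAddCommGroup X] [NormedSpace ℝ X]
    (δ δ₀ : ℝ) (hδ : 0 < δ) (hδδ₀ : δ < δ₀) (hδ₀ : δ₀ ≤ 1)
    (x₀ : X) (hx₀ : ‖x₀‖ ≤ 1)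
    (x₀star : X →L[ℝ] ℝ) (hx₀star : ‖x₀star‖ ≤ 1)
    (h : x₀star x₀ > 1 - δ₀) :
    Metric.infDist (x₀, x₀star)
      {p : X × (X →L[ℝ] ℝ) | ‖p.1‖ ≤ 1 ∧ ‖p.2‖ ≤ 1 ∧ p.2 p.1 > 1 - δ} ≤
      2 * (Real.sqrt (1 - δ) - Real.sqrt (1 - δ₀)) / (1 - Real.sqrt (1 - δ₀)) := by
  set r := Real.sqrt (1 - δ)
  set r₀ := Real.sqrt (1 - δ₀)
  have hr₀r : r₀ < r := Real.sqrt_lt_sqrt (by linarith) (by linarith)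
  have hr1 : r < 1 := (Real.sqrt_lt' one_pos).2 (by linarith)
  set t := (r - r₀) / (1 - r₀)
  have hrt : r₀ * (1 - t) + t = r := by
    have : 1 - r₀ ≠ 0 := (sub_pos.2 (hr₀r.trans hr1)).ne'
    simp only [t]; field_simp; ring
  have hδr : 1 - δ ≤ (r₀ * (1 - t) + t) ^ 2 := by rw [hrt, Real.sq_sqrt (by linarith)]
  have hx₀r₀ : r₀ ^ 2 < x₀star x₀ := by rw [Real.sq_sqrt (by linarith)]; exact h
  rw [mul_div_assoc]
  exact infDist_approxNormingPairs_le hx₀ hx₀star (div_nonneg (by linarith) (by linarith))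
    ((div_lt_one (by linarith)).2 (by linarith)) hx₀r₀ hδr

/-- Distance from a point of `A_X(δ₀)` to `A_X(δ)`, case `δ, δ₀ ∈ (0,1]`.
The product `X × X*` carries the sup (ℓ∞) metric. -/
theorem infDist_to_A_le
    (X : Type*) [NormedAddCommGroup X] [NormedSpace ℝ X] [CompleteSpace X]
    (δ δ₀ : ℝ) (hδ : 0 < δ) (hδδ₀ : δ < δ₀) (hδ₀ : δ₀ ≤ 1)
    (x₀ : X) (hx₀ : ‖x₀‖ ≤ 1)
    (x₀star : X →L[ℝ] ℝ) (hx₀star : ‖x₀star‖ ≤ 1)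
    (h : x₀star x₀ > 1 - δ₀) :
    Metric.infDist (x₀, x₀star)
      {p : X × (X →L[ℝ] ℝ) | ‖p.1‖ ≤ 1 ∧ ‖p.2‖ ≤ 1 ∧ p.2 p.1 > 1 - δ} ≤
      2 * (Real.sqrt (1 - δ) - Real.sqrt (1 - δ₀)) / (1 - Real.sqrt (1 - δ₀)) :=
  infDist_to_A_le_general X δ δ₀ hδ hδδ₀ hδ₀ x₀ hx₀ x₀star hx₀star h
end

section
/- Let H be a real Hilbert space of dimension at least 2 and 0 < δ < 2. There exist x, y ∈ S_H with ⟨x, y⟩ = 1 - δ such that for every z ∈ S_H, max{‖x - z‖, ‖y - z‖} ≥ √(2 - √(4 - 2δ)). -/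
/-! The bound holds for every pair of unit vectors `x, y` with `⟪x, y⟫ = 1 - δ`, not just a
special one. For a unit vector `z`, `⟪x, z⟫ + ⟪y, z⟫ = ⟪x + y, z⟫ ≤ ‖x + y‖ = √(4 - 2δ)`, so one
of `x, y`, say `w`, has `⟪w, z⟫ ≤ √(4 - 2δ) / 2`, and then
`‖w - z‖² = 2 - 2⟪w, z⟫ ≥ 2 - √(4 - 2δ)`. Such a pair exists as soon as `dim H ≥ 2`. -/

open RealInnerProductSpace

theorem exists_orthonormal_of_le_rank {𝕜 E : Type*} [RCLike 𝕜] [NormedAddCommGroup E]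
    [InnerProductSpace 𝕜 E] {n : ℕ} (hn : n ≤ Module.rank 𝕜 E) :
    ∃ e : Fin n → E, Orthonormal 𝕜 e :=
  let ⟨f, hf⟩ := exists_linearIndependent_of_le_rank hn
  ⟨InnerProductSpace.gramSchmidtNormed 𝕜 f, InnerProductSpace.gramSchmidtNormed_orthonormal hf⟩

section Real

variable {H : Type*} [NormedAddCommGroup H] [InnerProductSpace ℝ H]

theorem exists_norm_eq_one_inner_eq_of_two_le_rank (hrank : 2 ≤ Module.rank ℝ H) {c : ℝ}
    (hc : |c| ≤ 1) : ∃ x y : H, ‖x‖ = 1 ∧ ‖y‖ = 1 ∧ ⟪x, y⟫ = c := by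
  obtain ⟨e, he⟩ := exists_orthonormal_of_le_rank (𝕜 := ℝ) hrank
  have h01 : ⟪e 0, e 1⟫ = 0 := he.2 (by decide)
  set s := √(1 - c ^ 2)
  have hs : s ^ 2 = 1 - c ^ 2 := Real.sq_sqrt (by nlinarith [sq_abs c, abs_nonneg c])
  refine ⟨e 0, c • e 0 + s • e 1, he.1 0, ?_, ?_⟩
  · have hperp : ⟪c • e 0, s • e 1⟫ = 0 := by
      rw [real_inner_smul_left, real_inner_smul_right, h01, mul_zero, mul_zero]
    have hsq : ‖c • e 0 + s • e 1‖ ^ 2 = 1 := by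
      rw [norm_add_sq_real, hperp, norm_smul, norm_smul, he.1 0, he.1 1,
        Real.norm_eq_abs, Real.norm_eq_abs, mul_one, mul_one, sq_abs, sq_abs, hs]
      ring
    exact (pow_eq_one_iff_of_nonneg (norm_nonneg _) two_ne_zero).1 hsq
  · rw [inner_add_right, real_inner_smul_right, real_inner_smul_right, h01,
      real_inner_self_eq_norm_sq, he.1 0]
    ring

theorem norm_add_eq_sqrt_of_norm_eq_one {x y : H} (hx : ‖x‖ = 1) (hy : ‖y‖ = 1) :
    ‖x + y‖ = √(2 + 2 * ⟪x, y⟫) := by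
  rw [← Real.sqrt_sq (norm_nonneg (x + y)), norm_add_sq_real, hx, hy]
  ring_nf

theorem norm_sub_sq_eq_of_norm_eq_one {w z : H} (hw : ‖w‖ = 1) (hz : ‖z‖ = 1) :
    ‖w - z‖ ^ 2 = 2 - 2 * ⟪w, z⟫ := by
  rw [norm_sub_sq_real, hw, hz]
  ring

theorem two_sub_norm_add_le_max_norm_sub_sq {x y z : H} (hx : ‖x‖ = 1) (hy : ‖y‖ = 1)
    (hz : ‖z‖ = 1) : 2 - ‖x + y‖ ≤ max ‖x - z‖ ‖y - z‖ ^ 2 := by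
  have hsum : ⟪x, z⟫ + ⟪y, z⟫ ≤ ‖x + y‖ := by
    rw [← inner_add_left]
    simpa [hz] using real_inner_le_norm (x + y) z
  obtain h | h : ⟪x, z⟫ ≤ ‖x + y‖ / 2 ∨ ⟪y, z⟫ ≤ ‖x + y‖ / 2 := by
    by_contra! h
    linarith [h.1, h.2]
  · calc 2 - ‖x + y‖ ≤ ‖x - z‖ ^ 2 := by rw [norm_sub_sq_eq_of_norm_eq_one hx hz]; linarith
      _ ≤ max ‖x - z‖ ‖y - z‖ ^ 2 := by gcongr; exact le_max_left _ _
  · calc 2 - ‖x + y‖ ≤ ‖y - z‖ ^ 2 := by rw [norm_sub_sq_eq_of_norm_eq_one hy hz]; linarith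
      _ ≤ max ‖x - z‖ ‖y - z‖ ^ 2 := by gcongr; exact le_max_right _ _

end Real

theorem hilbert_spherical_lower_general
    (H : Type*) [NormedAddCommGroup H] [InnerProductSpace ℝ H]
    (hrank : 2 ≤ Module.rank ℝ H)
    (δ : ℝ) (hδ0 : 0 < δ) (hδ2 : δ < 2) :
    ∃ x y : H, ‖x‖ = 1 ∧ ‖y‖ = 1 ∧ (inner ℝ x y : ℝ) = 1 - δ ∧
      ∀ z : H, ‖z‖ = 1 →
        Real.sqrt (2 - Real.sqrt (4 - 2 * δ)) ≤ max ‖x - z‖ ‖y - z‖ := by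
  obtain ⟨x, y, hx, hy, hxy⟩ :=
    exists_norm_eq_one_inner_eq_of_two_le_rank (H := H) hrank (c := 1 - δ)
      (abs_le.2 ⟨by linarith, by linarith⟩)
  refine ⟨x, y, hx, hy, hxy, fun z hz => ?_⟩
  have hxy_norm : ‖x + y‖ = √(4 - 2 * δ) := by
    rw [norm_add_eq_sqrt_of_norm_eq_one hx hy, hxy]
    ring_nf
  rw [← hxy_norm, Real.sqrt_le_left (le_max_of_le_left (norm_nonneg _))]
  exact two_sub_norm_add_le_max_norm_sub_sq hx hy hz

/-- Spherical BPB lower bound in a real Hilbert space of dimension ≥ 2. -/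
theorem hilbert_spherical_lower
    (H : Type*) [NormedAddCommGroup H] [InnerProductSpace ℝ H] [CompleteSpace H]
    (hrank : 2 ≤ Module.rank ℝ H)
    (δ : ℝ) (hδ0 : 0 < δ) (hδ2 : δ < 2) :
    ∃ x y : H, ‖x‖ = 1 ∧ ‖y‖ = 1 ∧ (inner ℝ x y : ℝ) = 1 - δ ∧
      ∀ z : H, ‖z‖ = 1 →
        Real.sqrt (2 - Real.sqrt (4 - 2 * δ)) ≤ max ‖x - z‖ ‖y - z‖ :=
  hilbert_spherical_lower_general H hrank δ hδ0 hδ2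
end

section
/- Let H be a real Hilbert space and 1 < δ < 2. For any p, q ∈ B_H with ⟨p,q⟩ ≥ 1 - δ there exists z ∈ S_H such that ‖z - p‖ ≤ √δ and ‖z - q‖ ≤ √δ. -/
/-!
Take `w ≠ 0` orthogonal to `p - q` (possible since `dim H ≥ 2`), signed so that
`⟪w, p⟫ = ⟪w, q⟫ ≥ 0`, and move from the midpoint `(p + q) / 2`, which lies in the ball,
along `w` until the sphere is reached at `z = (p + q) / 2 + t • w`, `t ≥ 0`. Then
`‖z - p‖² = 1 - ⟪p, q⟫ - 2 t ⟪w, p⟫ ≤ 1 - ⟪p, q⟫ ≤ δ`, and symmetrically for `q`.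
-/

open RealInnerProductSpace

section

variable {H : Type*} [NormedAddCommGroup H] [InnerProductSpace ℝ H]

theorem exists_ne_zero_inner_eq_zero_of_two_le_rank (hrank : 2 ≤ Module.rank ℝ H) (v : H) :
    ∃ w ≠ 0, ⟪w, v⟫ = 0 := by
  have hspan : (ℝ ∙ v) ≠ ⊤ := fun htop => by
    have : Module.rank ℝ H ≤ 1 := by
      rw [← rank_top ℝ H, ← htop]
      simpa using rank_span_le (R := ℝ) {v}
    exact absurd (hrank.trans this) (by norm_num)
  obtain ⟨w, hw, hw0⟩ :=
    Submodule.exists_mem_ne_zero_of_ne_bot (mt Submodule.orthogonal_eq_bot_iff.mp hspan)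
  exact ⟨w, hw0, Submodule.mem_orthogonal_singleton_iff_inner_left.mp hw⟩

theorem exists_ne_zero_inner_eq_zero_inner_nonneg_of_two_le_rank
    (hrank : 2 ≤ Module.rank ℝ H) (v u : H) : ∃ w ≠ 0, ⟪w, v⟫ = 0 ∧ 0 ≤ ⟪w, u⟫ := by
  obtain ⟨w, hw0, hwv⟩ := exists_ne_zero_inner_eq_zero_of_two_le_rank hrank v
  rcases le_total 0 ⟪w, u⟫ with hwu | hwu
  · exact ⟨w, hw0, hwv, hwu⟩
  · exact ⟨-w, neg_ne_zero.mpr hw0, by rw [inner_neg_left, hwv, neg_zero],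
      by rw [inner_neg_left]; exact neg_nonneg.mpr hwu⟩

theorem exists_nonneg_norm_add_smul_eq {E : Type*} [NormedAddCommGroup E] [NormedSpace ℝ E]
    {m w : E} {r : ℝ} (hm : ‖m‖ ≤ r) (hw : w ≠ 0) : ∃ t : ℝ, 0 ≤ t ∧ ‖m + t • w‖ = r := by
  set T := (r + ‖m‖) / ‖w‖
  have hT : 0 ≤ T := div_nonneg (by linarith [norm_nonneg m]) (norm_nonneg w)
  have hfar : r ≤ ‖m + T • w‖ := by
    have hTw : ‖T • w‖ = r + ‖m‖ := by
      rw [norm_smul, Real.norm_of_nonneg hT, div_mul_cancel₀ _ (norm_ne_zero_iff.mpr hw)]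
    have := norm_sub_le (m + T • w) m
    rw [add_sub_cancel_left, hTw] at this
    linarith
  obtain ⟨t, ⟨ht, -⟩, htr⟩ := intermediate_value_Icc hT
    (by fun_prop : Continuous fun t : ℝ => ‖m + t • w‖).continuousOn
    ⟨by rwa [zero_smul, add_zero], hfar⟩
  exact ⟨t, ht, htr⟩

theorem norm_add_smul_sub_sq_le {p q w : H} {t : ℝ} (ht : 0 ≤ t) (hwp : 0 ≤ ⟪w, p⟫)
    (hz : ‖(2 : ℝ)⁻¹ • (p + q) + t • w‖ = 1) :
    ‖(2 : ℝ)⁻¹ • (p + q) + t • w - p‖ ^ 2 ≤ 1 - ⟪p, q⟫ := by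
  have hzp : ⟪(2 : ℝ)⁻¹ • (p + q) + t • w, p⟫ = 2⁻¹ * (‖p‖ ^ 2 + ⟪p, q⟫) + t * ⟪w, p⟫ := by
    rw [inner_add_left, real_inner_smul_left, real_inner_smul_left, inner_add_left,
      real_inner_self_eq_norm_sq, real_inner_comm p q]
  rw [norm_sub_sq_real, hz, hzp]
  linarith [mul_nonneg ht hwp]

theorem exists_norm_eq_one_norm_sub_sq_le_of_two_le_rank (hrank : 2 ≤ Module.rank ℝ H)
    {p q : H} (hp : ‖p‖ ≤ 1) (hq : ‖q‖ ≤ 1) :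
    ∃ z : H, ‖z‖ = 1 ∧ ‖z - p‖ ^ 2 ≤ 1 - ⟪p, q⟫ ∧ ‖z - q‖ ^ 2 ≤ 1 - ⟪p, q⟫ := by
  obtain ⟨w, hw0, hwpq, hwp⟩ :=
    exists_ne_zero_inner_eq_zero_inner_nonneg_of_two_le_rank hrank (p - q) p
  have hwq : ⟪w, q⟫ = ⟪w, p⟫ := by
    rw [inner_sub_right, sub_eq_zero] at hwpq
    exact hwpq.symm
  have hm : ‖(2 : ℝ)⁻¹ • (p + q)‖ ≤ 1 := by
    rw [norm_smul, Real.norm_of_nonneg (by norm_num)]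
    linarith [norm_add_le p q]
  obtain ⟨t, ht, hz⟩ := exists_nonneg_norm_add_smul_eq hm hw0
  refine ⟨_, hz, norm_add_smul_sub_sq_le ht hwp hz, ?_⟩
  have hzq := norm_add_smul_sub_sq_le (p := q) (q := p) ht (hwq ▸ hwp) (by rwa [add_comm q p])
  rwa [add_comm q p, real_inner_comm] at hzq

end

theorem hilbert_modulus_upper_large_delta_general
    (H : Type*) [NormedAddCommGroup H] [InnerProductSpace ℝ H]
    (hrank : 2 ≤ Module.rank ℝ H)
    (δ : ℝ)
    (p q : H) (hp : ‖p‖ ≤ 1) (hq : ‖q‖ ≤ 1)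
    (h : (inner ℝ p q : ℝ) ≥ 1 - δ) :
    ∃ z : H, ‖z‖ = 1 ∧ ‖z - p‖ ≤ Real.sqrt δ ∧ ‖z - q‖ ≤ Real.sqrt δ := by
  obtain ⟨z, hz, hzp, hzq⟩ := exists_norm_eq_one_norm_sub_sq_le_of_two_le_rank hrank hp hq
  exact ⟨z, hz, Real.le_sqrt_of_sq_le (by linarith), Real.le_sqrt_of_sq_le (by linarith)⟩

/-- BPB modulus upper bound √δ in a real Hilbert space of dimension ≥ 2,
for δ ∈ (1,2). -/
theorem hilbert_modulus_upper_large_delta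
    (H : Type*) [NormedAddCommGroup H] [InnerProductSpace ℝ H] [CompleteSpace H]
    (hrank : 2 ≤ Module.rank ℝ H)
    (δ : ℝ) (hδ1 : 1 < δ) (hδ2 : δ < 2)
    (p q : H) (hp : ‖p‖ ≤ 1) (hq : ‖q‖ ≤ 1)
    (h : (inner ℝ p q : ℝ) ≥ 1 - δ) :
    ∃ z : H, ‖z‖ = 1 ∧ ‖z - p‖ ≤ Real.sqrt δ ∧ ‖z - q‖ ≤ Real.sqrt δ :=
  hilbert_modulus_upper_large_delta_general H hrank δ p q hp hq h
end

section
/- Let Y, Z be nontrivial real Banach spaces, X = Y ⊕₁ Z their ℓ₁-sum, and 0 < δ ≤ 1/2. There exist x₀ ∈ S_X and x₀* ∈ S_{X*} with x₀*(x₀) = 1 - δ such that for every (x, x*) ∈ Π(X), either ‖x₀ - x‖ ≥ √(2δ) or ‖x₀* - x*‖ ≥ √(2δ). -/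
/-!
With `t = √(2δ)/2`, take `x₀ = (t y₀, (1 - t) z₀)` and `x₀* = ((1 - 2t) y₀*, z₀*)`, so that
`x₀*(x₀) = 1 - 2t² = 1 - δ`. Let `(x, x*) ∈ Π(X)` with `x = (y, z)`. If `y = 0`, then `‖z‖ = 1`
and already the first coordinate and the reverse triangle inequality in the second give
`‖x₀ - x‖ ≥ t + t`. If `y ≠ 0`, then `x*` attains its norm at `(y, 0)` because the ℓ₁-norm is
additive along `x = (y, 0) + (0, z)`; since `x₀*(y, 0) ≤ (1 - 2t)‖y‖`, testing `x* - x₀*`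
at `(y, 0)` gives `‖x* - x₀*‖ ≥ 2t`.
-/

open WithLp

section NormingFunctional

variable {E : Type*} [NormedAddCommGroup E] [NormedSpace ℝ E]

theorem ContinuousLinearMap.apply_le_norm_of_norm_le_one {φ : E →L[ℝ] ℝ} (hφ : ‖φ‖ ≤ 1)
    (u : E) : φ u ≤ ‖u‖ := by
  simpa using (le_abs_self _).trans (φ.le_of_opNorm_le hφ u)

theorem ContinuousLinearMap.apply_eq_norm_of_apply_add_eq {φ : E →L[ℝ] ℝ} (hφ : ‖φ‖ ≤ 1)
    {u v : E} (h : φ (u + v) = ‖u‖ + ‖v‖) : φ u = ‖u‖ := by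
  have hu := φ.apply_le_norm_of_norm_le_one hφ u
  have hv := φ.apply_le_norm_of_norm_le_one hφ v
  rw [map_add] at h
  linarith

theorem ContinuousLinearMap.one_sub_le_norm_sub_of_apply_eq_norm {φ ψ : E →L[ℝ] ℝ} {u : E}
    {c : ℝ} (hu : u ≠ 0) (hφ : φ u = ‖u‖) (hψ : ψ u ≤ c * ‖u‖) : 1 - c ≤ ‖φ - ψ‖ := by
  refine le_of_mul_le_mul_right ?_ (norm_pos_iff.mpr hu)
  calc (1 - c) * ‖u‖ ≤ (φ - ψ) u := by rw [sub_apply, hφ]; linarith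
    _ ≤ ‖(φ - ψ) u‖ := Real.le_norm_self _
    _ ≤ ‖φ - ψ‖ * ‖u‖ := (φ - ψ).le_opNorm u

end NormingFunctional

namespace WithLp

variable {𝕜 E F G : Type*} [NontriviallyNormedField 𝕜]
  [SeminormedAddCommGroup E] [NormedSpace 𝕜 E] [SeminormedAddCommGroup F] [NormedSpace 𝕜 F]
  [SeminormedAddCommGroup G] [NormedSpace 𝕜 G]

/-- The functional `(f, g) ∈ E* ⊕∞ F* = (E ⊕₁ F)*`, allowing values in any `G`. -/
noncomputable def l1Coprod (f : E →L[𝕜] G) (g : F →L[𝕜] G) : WithLp 1 (E × F) →L[𝕜] G :=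
  f.comp (fstL 1 𝕜 E F) + g.comp (sndL 1 𝕜 E F)

@[simp]
theorem l1Coprod_apply (f : E →L[𝕜] G) (g : F →L[𝕜] G) (x : WithLp 1 (E × F)) :
    l1Coprod f g x = f x.fst + g x.snd := rfl

theorem norm_l1Coprod (f : E →L[𝕜] G) (g : F →L[𝕜] G) :
    ‖l1Coprod f g‖ = max ‖f‖ ‖g‖ := by
  apply le_antisymm
  · refine (l1Coprod f g).opNorm_le_bound (le_max_of_le_left (norm_nonneg f)) fun x => ?_
    calc ‖f x.fst + g x.snd‖ ≤ ‖f x.fst‖ + ‖g x.snd‖ := norm_add_le _ _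
      _ ≤ ‖f‖ * ‖x.fst‖ + ‖g‖ * ‖x.snd‖ := add_le_add (f.le_opNorm _) (g.le_opNorm _)
      _ ≤ max ‖f‖ ‖g‖ * ‖x.fst‖ + max ‖f‖ ‖g‖ * ‖x.snd‖ := by gcongr <;> simp
      _ = max ‖f‖ ‖g‖ * ‖x‖ := by rw [prod_norm_eq_of_L1, mul_add]
  · refine max_le (f.opNorm_le_bound (norm_nonneg _) fun a => ?_)
      (g.opNorm_le_bound (norm_nonneg _) fun b => ?_)
    · simpa using (l1Coprod f g).le_opNorm (toLp 1 (a, (0 : F)))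
    · simpa using (l1Coprod f g).le_opNorm (toLp 1 ((0 : E), b))

end WithLp

theorem exists_norm_one_dual_pair_s12 (E : Type*) [NormedAddCommGroup E] [NormedSpace ℝ E]
    [Nontrivial E] : ∃ (x : E) (f : E →L[ℝ] ℝ), ‖x‖ = 1 ∧ ‖f‖ = 1 ∧ f x = 1 := by
  obtain ⟨x, hx⟩ := exists_norm_eq E zero_le_one
  obtain ⟨f, hf, hfx⟩ := exists_dual_vector ℝ x (by simp [hx])
  exact ⟨x, f, hx, hf, by simpa [hx] using hfx⟩

section WorstPair

variable {Y Z : Type*} [NormedAddCommGroup Y] [NormedSpace ℝ Y]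
  [NormedAddCommGroup Z] [NormedSpace ℝ Z]

theorem norm_toLp_smul_one_sub_smul {y₀ : Y} {z₀ : Z} (hy₀ : ‖y₀‖ = 1) (hz₀ : ‖z₀‖ = 1)
    {t : ℝ} (ht0 : 0 ≤ t) (ht1 : t ≤ 1) : ‖toLp 1 (t • y₀, (1 - t) • z₀)‖ = 1 := by
  rw [prod_norm_eq_of_L1, toLp_fst, toLp_snd, norm_smul, norm_smul, hy₀, hz₀,
    Real.norm_of_nonneg ht0, Real.norm_of_nonneg (sub_nonneg.mpr ht1)]
  ring

theorem two_mul_le_norm_sub_or {y₀ : Y} {z₀ : Z} {f₀ : Y →L[ℝ] ℝ} (g₀ : Z →L[ℝ] ℝ)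
    (hy₀ : ‖y₀‖ = 1) (hz₀ : ‖z₀‖ = 1) (hf₀ : ‖f₀‖ ≤ 1) {t : ℝ} (ht0 : 0 ≤ t) (ht : t ≤ 1 / 2)
    {x : WithLp 1 (Y × Z)} {xstar : WithLp 1 (Y × Z) →L[ℝ] ℝ}
    (hx : ‖x‖ = 1) (hxstar : ‖xstar‖ ≤ 1) (hxx : xstar x = 1) :
    2 * t ≤ ‖toLp 1 (t • y₀, (1 - t) • z₀) - x‖ ∨
      2 * t ≤ ‖WithLp.l1Coprod ((1 - 2 * t) • f₀) g₀ - xstar‖ := by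
  rw [prod_norm_eq_of_L1] at hx
  by_cases hy : x.fst = 0
  · left
    have hz : ‖x.snd‖ = 1 := by simpa [hy] using hx
    have hsnd := norm_sub_norm_le x.snd ((1 - t) • z₀)
    rw [norm_smul, hz₀, Real.norm_of_nonneg (by linarith), norm_sub_rev] at hsnd
    rw [prod_norm_eq_of_L1, sub_fst, sub_snd, toLp_fst, toLp_snd, hy, sub_zero, norm_smul, hy₀,
      Real.norm_of_nonneg ht0]
    linarith
  · right
    rw [norm_sub_rev]
    have hsplit : x = toLp 1 (x.fst, 0) + toLp 1 (0, x.snd) := by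
      rw [WithLp.ext_iff]; ext <;> simp
    have hnorming : xstar (toLp 1 (x.fst, 0)) = ‖toLp 1 (x.fst, (0 : Z))‖ := by
      refine xstar.apply_eq_norm_of_apply_add_eq hxstar (v := toLp 1 (0, x.snd)) ?_
      rw [← hsplit, hxx, norm_toLp_fst, norm_toLp_snd, hx]
    have hx₀star : WithLp.l1Coprod ((1 - 2 * t) • f₀) g₀ (toLp 1 (x.fst, 0)) ≤
        (1 - 2 * t) * ‖toLp 1 (x.fst, (0 : Z))‖ := by
      simpa [norm_toLp_fst] using mul_le_mul_of_nonneg_left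
        (f₀.apply_le_norm_of_norm_le_one hf₀ x.fst) (by linarith : 0 ≤ 1 - 2 * t)
    have := xstar.one_sub_le_norm_sub_of_apply_eq_norm (by simpa using hy) hnorming hx₀star
    linarith

end WorstPair

theorem ell1_sum_worst_modulus_general
    (Y Z : Type*) [NormedAddCommGroup Y] [NormedSpace ℝ Y]
    [NormedAddCommGroup Z] [NormedSpace ℝ Z]
    [Nontrivial Y] [Nontrivial Z]
    (δ : ℝ) (hδ0 : 0 < δ) (hδ : δ ≤ 1 / 2) :
    ∃ (x₀ : WithLp 1 (Y × Z)) (x₀star : WithLp 1 (Y × Z) →L[ℝ] ℝ),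
      ‖x₀‖ = 1 ∧ ‖x₀star‖ = 1 ∧ x₀star x₀ = 1 - δ ∧
      ∀ (x : WithLp 1 (Y × Z)) (xstar : WithLp 1 (Y × Z) →L[ℝ] ℝ),
        ‖x‖ = 1 → ‖xstar‖ = 1 → xstar x = 1 →
        Real.sqrt (2 * δ) ≤ ‖x₀ - x‖ ∨ Real.sqrt (2 * δ) ≤ ‖x₀star - xstar‖ := by
  obtain ⟨y₀, f₀, hy₀, hf₀, hf₀y₀⟩ := exists_norm_one_dual_pair_s12 Y
  obtain ⟨z₀, g₀, hz₀, hg₀, hg₀z₀⟩ := exists_norm_one_dual_pair_s12 Z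
  set t := Real.sqrt (2 * δ) / 2
  have h2t : 2 * t = Real.sqrt (2 * δ) := by ring
  have ht0 : 0 ≤ t := by positivity
  have ht : t ≤ 1 / 2 := by
    have : Real.sqrt (2 * δ) ≤ 1 := Real.sqrt_le_one.mpr (by linarith)
    linarith
  have htsq : 2 * t ^ 2 = δ := by
    have := Real.sq_sqrt (by linarith : 0 ≤ 2 * δ)
    nlinarith
  refine ⟨toLp 1 (t • y₀, (1 - t) • z₀), WithLp.l1Coprod ((1 - 2 * t) • f₀) g₀,
    norm_toLp_smul_one_sub_smul hy₀ hz₀ ht0 (by linarith), ?_, ?_, ?_⟩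
  · rw [WithLp.norm_l1Coprod, norm_smul, hf₀, hg₀, Real.norm_of_nonneg (by linarith)]
    simp [ht0]
  · simp only [WithLp.l1Coprod_apply, toLp_fst, toLp_snd, map_smul,
      smul_apply, hf₀y₀, hg₀z₀, smul_eq_mul]
    linear_combination -htsq
  · intro x xstar hx hxstar hxx
    rw [← h2t]
    exact two_mul_le_norm_sub_or g₀ hy₀ hz₀ hf₀.le ht0 ht hx hxstar.le hxx

/-- In an ℓ₁-sum `X = Y ⊕₁ Z` of nontrivial Banach spaces,
`Φ_X(δ) = √(2δ)` for `0 < δ ≤ 1/2`: there is a pair witnessing the worst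
possible BPB behavior. -/
theorem ell1_sum_worst_modulus
    (Y Z : Type*) [NormedAddCommGroup Y] [NormedSpace ℝ Y] [CompleteSpace Y]
    [NormedAddCommGroup Z] [NormedSpace ℝ Z] [CompleteSpace Z]
    [Nontrivial Y] [Nontrivial Z]
    (δ : ℝ) (hδ0 : 0 < δ) (hδ : δ ≤ 1 / 2) :
    ∃ (x₀ : WithLp 1 (Y × Z)) (x₀star : WithLp 1 (Y × Z) →L[ℝ] ℝ),
      ‖x₀‖ = 1 ∧ ‖x₀star‖ = 1 ∧ x₀star x₀ = 1 - δ ∧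
      ∀ (x : WithLp 1 (Y × Z)) (xstar : WithLp 1 (Y × Z) →L[ℝ] ℝ),
        ‖x‖ = 1 → ‖xstar‖ = 1 → xstar x = 1 →
        Real.sqrt (2 * δ) ≤ ‖x₀ - x‖ ∨ Real.sqrt (2 * δ) ≤ ‖x₀star - xstar‖ :=
  ell1_sum_worst_modulus_general Y Z δ hδ0 hδ
end

section
/- A real Banach space E contains an isometric copy of ℓ∞⁽²⁾ if and only if there exist u, v ∈ S_E with ‖u - v‖ = ‖u + v‖ = 2. -/
/-!
Take `u = f (1, 1)` and `v = f (1, -1)` for an isometry `f`. Conversely, if `u, v` are unit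
vectors with `‖u ± v‖ = 2`, then `‖s • u + t • v‖ = |s| + |t|` for all `s, t`, so `u, v` span an
isometric copy of `ℓ₁⁽²⁾`, and `ℓ∞⁽²⁾ ≅ ℓ₁⁽²⁾` via `(x, y) ↦ ((x + y) / 2, (x - y) / 2)`.
-/

lemma norm_fin_two_eq_max_abs (x : Fin 2 → ℝ) : ‖x‖ = max |x 0| |x 1| := by
  simp [Pi.norm_def, Fin.univ_succ, Real.norm_eq_abs]

lemma abs_add_add_abs_sub_eq_two_mul_max (p q : ℝ) : |p + q| + |p - q| = 2 * max |p| |q| := by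
  cases abs_cases (p + q) <;> cases abs_cases (p - q) <;> cases abs_cases p <;>
    cases abs_cases q <;> grind

section

variable {E : Type*} [NormedAddCommGroup E] [NormedSpace ℝ E] {u v : E}

lemma norm_smul_add_smul_of_nonneg (hu : ‖u‖ = 1) (hv : ‖v‖ = 1) (huv : ‖u + v‖ = 2)
    {s t : ℝ} (hs : 0 ≤ s) (ht : 0 ≤ t) : ‖s • u + t • v‖ = s + t := by
  refine le_antisymm ?_ ?_
  · calc ‖s • u + t • v‖ ≤ ‖s • u‖ + ‖t • v‖ := norm_add_le _ _
      _ = s + t := by rw [norm_smul, norm_smul, hu, hv, Real.norm_of_nonneg hs,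
          Real.norm_of_nonneg ht, mul_one, mul_one]
  wlog hts : t ≤ s generalizing u v s t
  · rw [add_comm s, add_comm (s • u)]
    exact this hv hu (by rwa [add_comm]) ht hs (le_of_not_ge hts)
  -- reverse triangle inequality for `s • (u + v) - (s - t) • v`, whose first term has norm `2 * s`
  calc s + t = ‖s • (u + v)‖ - ‖(s - t) • v‖ := by
        rw [norm_smul, norm_smul, huv, hv, Real.norm_of_nonneg hs,
          Real.norm_of_nonneg (sub_nonneg.2 hts)]
        ring
    _ ≤ ‖s • (u + v) - (s - t) • v‖ := norm_sub_norm_le _ _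
    _ = ‖s • u + t • v‖ := by congr 1; module

lemma norm_smul_add_smul_eq_abs_add_abs (hu : ‖u‖ = 1) (hv : ‖v‖ = 1) (hsub : ‖u - v‖ = 2)
    (hadd : ‖u + v‖ = 2) (s t : ℝ) : ‖s • u + t • v‖ = |s| + |t| := by
  have hu' : ‖-u‖ = 1 := by rwa [norm_neg]
  have hv' : ‖-v‖ = 1 := by rwa [norm_neg]
  rcases le_total 0 s with hs | hs <;> rcases le_total 0 t with ht | ht
  · rw [abs_of_nonneg hs, abs_of_nonneg ht]
    exact norm_smul_add_smul_of_nonneg hu hv hadd hs ht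
  · rw [abs_of_nonneg hs, abs_of_nonpos ht, ← neg_smul_neg t]
    exact norm_smul_add_smul_of_nonneg hu hv' (by rwa [← sub_eq_add_neg]) hs (neg_nonneg.2 ht)
  · rw [abs_of_nonpos hs, abs_of_nonneg ht, ← neg_smul_neg s]
    refine norm_smul_add_smul_of_nonneg hu' hv ?_ (neg_nonneg.2 hs) ht
    rwa [neg_add_eq_sub, ← norm_neg, neg_sub]
  · rw [abs_of_nonpos hs, abs_of_nonpos ht, ← neg_smul_neg s, ← neg_smul_neg t]
    refine norm_smul_add_smul_of_nonneg hu' hv' ?_ (neg_nonneg.2 hs) (neg_nonneg.2 ht)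
    rwa [← neg_add, norm_neg]

variable (u v) in
noncomputable def linftyTwoMap : (Fin 2 → ℝ) →ₗ[ℝ] E where
  toFun x := ((x 0 + x 1) / 2) • u + ((x 0 - x 1) / 2) • v
  map_add' x y := by simp only [Pi.add_apply]; module
  map_smul' c x := by simp only [Pi.smul_apply, smul_eq_mul, RingHom.id_apply]; module

lemma norm_linftyTwoMap (hu : ‖u‖ = 1) (hv : ‖v‖ = 1) (hsub : ‖u - v‖ = 2)
    (hadd : ‖u + v‖ = 2) (x : Fin 2 → ℝ) : ‖linftyTwoMap u v x‖ = ‖x‖ := by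
  have key := abs_add_add_abs_sub_eq_two_mul_max (x 0) (x 1)
  change ‖((x 0 + x 1) / 2) • u + ((x 0 - x 1) / 2) • v‖ = ‖x‖
  rw [norm_smul_add_smul_eq_abs_add_abs hu hv hsub hadd, norm_fin_two_eq_max_abs, abs_div,
    abs_div, abs_two]
  linarith

end

theorem isometric_linf2_iff_general
    (E : Type*) [NormedAddCommGroup E] [NormedSpace ℝ E] :
    Nonempty ((Fin 2 → ℝ) →ₗᵢ[ℝ] E) ↔
      ∃ u v : E, ‖u‖ = 1 ∧ ‖v‖ = 1 ∧ ‖u - v‖ = 2 ∧ ‖u + v‖ = 2 := by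
  constructor
  · rintro ⟨f⟩
    refine ⟨f ![1, 1], f ![1, -1], ?_, ?_, ?_, ?_⟩ <;>
      simp only [← map_sub, ← map_add, f.norm_map, norm_fin_two_eq_max_abs] <;> norm_num
  · rintro ⟨u, v, hu, hv, hsub, hadd⟩
    exact ⟨⟨linftyTwoMap u v, norm_linftyTwoMap hu hv hsub hadd⟩⟩

/-- A real Banach space contains an isometric copy of `ℓ∞⁽²⁾` iff there are
unit vectors `u, v` with `‖u - v‖ = ‖u + v‖ = 2`. -/
theorem isometric_linf2_iff
    (E : Type*) [NormedAddCommGroup E] [NormedSpace ℝ E] [CompleteSpace E] :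
    Nonempty ((Fin 2 → ℝ) →ₗᵢ[ℝ] E) ↔
      ∃ u v : E, ‖u‖ = 1 ∧ ‖v‖ = 1 ∧ ‖u - v‖ = 2 ∧ ‖u + v‖ = 2 :=
  isometric_linf2_iff_general E
end

section
/- Let X be a real Banach space, x*, y* ∈ S_{X*}, and ε > 0. If x*(w) ≤ ε/2 for every w ∈ ker y* ∩ S_X, then dist(x*, span{y*}) ≤ ε/2 and min{‖x* - y*‖, ‖x* + y*‖} ≤ ε. -/
/-!
On `ker y*` the functional `x*` has norm at most `ε/2`, since the hypothesis applied to `w` and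
`-w` bounds `|x* w|`. A Hahn–Banach extension `g` of this restriction agrees with `x*` on
`ker y*`, so `x* - g = c • y*` for some scalar `c`, and `‖x* - c • y*‖ = ‖g‖ ≤ ε/2`. Since
`‖x*‖ = ‖y*‖ = 1`, the reverse triangle inequality forces `||c| - 1| ≤ ε/2`, so `x*` is within
`ε` of `y*` or of `-y*` according to the sign of `c`.
-/

open LinearMap (ker)

theorem ContinuousLinearMap.exists_eq_smul_of_ker_le {𝕜 E : Type*} [NormedField 𝕜]
    [SeminormedAddCommGroup E] [NormedSpace 𝕜 E] {f g : StrongDual 𝕜 E}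
    (h : ker (f : E →ₗ[𝕜] 𝕜) ≤ ker (g : E →ₗ[𝕜] 𝕜)) :
    ∃ c : 𝕜, g = c • f := by
  have hmem := mem_span_of_iInf_ker_le_ker (L := fun _ : Unit ↦ (f : E →ₗ[𝕜] 𝕜))
    (K := (g : E →ₗ[𝕜] 𝕜)) (by simpa using h)
  rw [Set.range_const, Submodule.mem_span_singleton] at hmem
  obtain ⟨c, hc⟩ := hmem
  exact ⟨c, ContinuousLinearMap.coe_injective hc.symm⟩

theorem ContinuousLinearMap.norm_comp_subtypeL_le {E : Type*} [SeminormedAddCommGroup E]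
    [NormedSpace ℝ E] (f : StrongDual ℝ E) (K : Submodule ℝ E) {C : ℝ} (hC : 0 ≤ C)
    (hf : ∀ w ∈ K, ‖w‖ = 1 → f w ≤ C) : ‖f.comp K.subtypeL‖ ≤ C := by
  refine opNorm_le_of_unit_norm hC fun w hw ↦ ?_
  have hpos : f w ≤ C := hf w w.2 hw
  have hneg : f (-w) ≤ C := hf (-w) (K.neg_mem w.2) (by rwa [norm_neg])
  rw [map_neg] at hneg
  rw [comp_apply, Submodule.subtypeL_apply, Real.norm_eq_abs]
  exact abs_le.2 ⟨by linarith, hpos⟩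

theorem ContinuousLinearMap.exists_norm_sub_smul_le {𝕜 E : Type*} [RCLike 𝕜]
    [NormedAddCommGroup E] [NormedSpace 𝕜 E] (f g : StrongDual 𝕜 E) :
    ∃ c : 𝕜, ‖f - c • g‖ ≤ ‖f.comp (ker (g : E →ₗ[𝕜] 𝕜)).subtypeL‖ := by
  obtain ⟨e, he, he_norm⟩ := exists_extension_norm_eq _ (f.comp (ker (g : E →ₗ[𝕜] 𝕜)).subtypeL)
  have hker : ker (g : E →ₗ[𝕜] 𝕜) ≤ ker ((f - e : StrongDual 𝕜 E) : E →ₗ[𝕜] 𝕜) := fun w hw ↦ by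
    simp [he ⟨w, hw⟩]
  obtain ⟨c, hc⟩ := exists_eq_smul_of_ker_le hker
  exact ⟨c, by rw [← hc, sub_sub_cancel, he_norm]⟩

section RealNormed

variable {E : Type*} [SeminormedAddCommGroup E] [NormedSpace ℝ E] {x y : E}

theorem norm_sub_smul_le_add_abs_sub (hy : ‖y‖ = 1) (a c : ℝ) :
    ‖x - a • y‖ ≤ ‖x - c • y‖ + |c - a| := by
  calc ‖x - a • y‖ = ‖(x - c • y) + (c - a) • y‖ := by congr 1; module
    _ ≤ ‖x - c • y‖ + |c - a| := by
      simpa [norm_smul, hy] using norm_add_le (x - c • y) ((c - a) • y)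

theorem min_norm_sub_norm_add_le_of_norm_sub_smul_le (hx : ‖x‖ = 1) (hy : ‖y‖ = 1) {c δ : ℝ}
    (hc : ‖x - c • y‖ ≤ δ) : min ‖x - y‖ ‖x + y‖ ≤ 2 * δ := by
  have habs : |‖x‖ - ‖c • y‖| ≤ δ := (abs_norm_sub_norm_le x (c • y)).trans hc
  rw [hx, norm_smul, hy, mul_one, Real.norm_eq_abs] at habs
  rcases le_or_gt 0 c with hc0 | hc0
  · rw [abs_of_nonneg hc0, abs_sub_comm] at habs
    have := norm_sub_smul_le_add_abs_sub (x := x) hy 1 c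
    rw [one_smul] at this
    exact (min_le_left _ _).trans (by linarith)
  · rw [abs_of_neg hc0, sub_neg_eq_add, add_comm] at habs
    have := norm_sub_smul_le_add_abs_sub (x := x) hy (-1) c
    rw [neg_one_smul, sub_neg_eq_add, sub_neg_eq_add] at this
    exact (min_le_right _ _).trans (by linarith)

end RealNormed

theorem bishop_phelps_kernel_lemma_general
    (X : Type*) [NormedAddCommGroup X] [NormedSpace ℝ X]
    (xstar ystar : X →L[ℝ] ℝ) (hx : ‖xstar‖ = 1) (hy : ‖ystar‖ = 1)
    (ε : ℝ) (hε : 0 < ε)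
    (h : ∀ w : X, ystar w = 0 → ‖w‖ = 1 → xstar w ≤ ε / 2) :
    Metric.infDist xstar (Submodule.span ℝ {ystar} : Set (X →L[ℝ] ℝ)) ≤ ε / 2 ∧
      min ‖xstar - ystar‖ ‖xstar + ystar‖ ≤ ε := by
  have hrestrict : ‖xstar.comp (ker (ystar : X →ₗ[ℝ] ℝ)).subtypeL‖ ≤ ε / 2 :=
    xstar.norm_comp_subtypeL_le _ (by positivity) h
  obtain ⟨c, hc⟩ := xstar.exists_norm_sub_smul_le ystar
  have hclose : ‖xstar - c • ystar‖ ≤ ε / 2 := hc.trans hrestrict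
  refine ⟨?_, ?_⟩
  · have hmem : c • ystar ∈ Submodule.span ℝ {ystar} :=
      Submodule.smul_mem _ c (Submodule.mem_span_singleton_self ystar)
    exact (Metric.infDist_le_dist_of_mem hmem).trans (by rwa [dist_eq_norm])
  · linarith [min_norm_sub_norm_add_le_of_norm_sub_smul_le hx hy hclose]

/-- Bishop-Phelps lemma: if `x*` is at most `ε/2` on the unit sphere of
`ker y*`, then `x*` is within `ε/2` of the span of `y*` and within `ε` of
`±y*`. -/
theorem bishop_phelps_kernel_lemma
    (X : Type*) [NormedAddCommGroup X] [NormedSpace ℝ X] [CompleteSpace X]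
    (xstar ystar : X →L[ℝ] ℝ) (hx : ‖xstar‖ = 1) (hy : ‖ystar‖ = 1)
    (ε : ℝ) (hε : 0 < ε)
    (h : ∀ w : X, ystar w = 0 → ‖w‖ = 1 → xstar w ≤ ε / 2) :
    Metric.infDist xstar (Submodule.span ℝ {ystar} : Set (X →L[ℝ] ℝ)) ≤ ε / 2 ∧
      min ‖xstar - ystar‖ ‖xstar + ystar‖ ≤ ε :=
  bishop_phelps_kernel_lemma_general X xstar ystar hx hy ε hε h
end
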